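/- arXiv:1712.07533 — 2 statements merged into one kernel-verified Lean document; each statement's English description precedes it below -/
import Mathlib

section
/- Let λ ∈ ℂ with |λ| ∉ {0, 1}, let S be a set with a bijection R : S → S, and let Λ be the (l+1)×(l+1) Jordan block of eigenvalue λ. Suppose h : S → ℂ^{l+1} satisfies ‖h ∘ R − Λ^{−1} h‖ = O(1) (i.e., is uniformly bounded on S). Then there exists a unique function ĥ : S → ℂ^{l+1} such that ĥ ∘ R = Λ^{−1} ĥ and ĥ − h is uniformly bounded on S. -/
/-!
For `‖λ‖ < 1` the equation `ĥ ∘ R = Λ⁻¹ ĥ` reads `ĥ = Λ ĥ ∘ R`, and for `‖λ‖ > 1` it reads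
`ĥ = Λ⁻¹ ĥ ∘ R⁻¹`. In either case it has the form `ĥ = M ĥ ∘ T` where `M` is a scalar of
norm `< 1` plus a nilpotent, so that `∑ ‖Mⁿ‖ < ∞` by the binomial expansion of `Mⁿ`.
The solution is then `ĥ = h + ∑ₙ Mⁿ e ∘ Tⁿ` with the bounded defect `e = M h ∘ T - h`,
and the difference `d` of two bounded perturbations of `h` satisfies `d = Mⁿ d ∘ Tⁿ` for all
`n`, hence vanishes.
-/

open Filter Topology Finset Polynomial Matrix

def jordanBlock (l : ℕ) (lam : ℂ) : Matrix (Fin (l + 1)) (Fin (l + 1)) ℂ :=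
  fun i j => if (i : ℕ) = (j : ℕ) then lam else if (i : ℕ) = (j : ℕ) + 1 then 1 else 0

theorem summable_choose_mul_pow_sub (k : ℕ) {r : ℝ} (hr : ‖r‖ < 1) :
    Summable fun n : ℕ => (n.choose k : ℝ) * r ^ (n - k) := by
  rw [← summable_nat_add_iff k]
  simpa using summable_choose_mul_geometric_of_norm_lt_one k hr

theorem summable_norm_pow_of_isNilpotent_sub_algebraMap {𝕜 A : Type*} [NormedField 𝕜]
    [NormedRing A] [NormedAlgebra 𝕜 A] {a : A} {μ : 𝕜} (hμ : ‖μ‖ < 1)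
    (ha : IsNilpotent (a - algebraMap 𝕜 A μ)) : Summable fun n => ‖a ^ n‖ := by
  obtain ⟨m, hm⟩ := ha
  set N := a - algebraMap 𝕜 A μ
  set g : ℕ → ℕ → ℝ := fun n k => n.choose k * (‖μ‖ ^ (n - k) * ‖N ^ k‖)
  have hbound : ∀ n, ‖a ^ n‖ ≤ ∑ k ∈ range m, g n k := by
    intro n
    have hbinom : a ^ n = ∑ k ∈ range (n + 1), n.choose k • (μ ^ (n - k) • N ^ k) := by
      rw [← sub_add_cancel a (algebraMap 𝕜 A μ), (Algebra.commute_algebraMap_right μ N).add_pow]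
      refine sum_congr rfl fun k _ => ?_
      rw [← map_pow, ← Algebra.commutes, ← Algebra.smul_def, ← nsmul_eq_mul']
    have hvanish : ∀ k ≥ min (n + 1) m, g n k = 0 := by
      intro k hk
      rcases min_le_iff.mp hk with hk | hk
      · simp [g, Nat.choose_eq_zero_of_lt (Nat.lt_of_succ_le hk)]
      · simp [g, pow_eq_zero_of_le hk hm]
    calc ‖a ^ n‖ ≤ ∑ k ∈ range (n + 1), g n k := by
          rw [hbinom]
          refine (norm_sum_le _ _).trans (sum_le_sum fun k _ => ?_)
          exact norm_nsmul_le.trans_eq (by rw [norm_smul, norm_pow])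
      _ = ∑ k ∈ range m, g n k :=
          (eventually_constant_sum hvanish (min_le_left _ _)).trans
            (eventually_constant_sum hvanish (min_le_right _ _)).symm
  refine Summable.of_nonneg_of_le (fun _ => norm_nonneg _) hbound (summable_sum fun k _ => ?_)
  exact ((summable_choose_mul_pow_sub k (r := ‖μ‖) (by rwa [norm_norm])).mul_right _).congr
    fun n => mul_assoc _ _ _

section Unipotent

variable {𝕜 A : Type*} [Field 𝕜] [Ring A] [Algebra 𝕜 A] {μ : 𝕜}

theorem isUnit_of_isNilpotent_sub_algebraMap {a : A} (hμ : μ ≠ 0)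
    (ha : IsNilpotent (a - algebraMap 𝕜 A μ)) : IsUnit a :=
  sub_add_cancel a (algebraMap 𝕜 A μ) ▸ ha.isUnit_add_right_of_commute
    ((Units.mk0 μ hμ).isUnit.map _) (Algebra.commute_algebraMap_right μ _)

theorem Units.isNilpotent_inv_sub_algebraMap (u : Aˣ) (hμ : μ ≠ 0)
    (hu : IsNilpotent (↑u - algebraMap 𝕜 A μ)) :
    IsNilpotent (↑u⁻¹ - algebraMap 𝕜 A μ⁻¹) := by
  have hcomm : Commute (-(algebraMap 𝕜 A μ⁻¹ * ↑u⁻¹)) (↑u - algebraMap 𝕜 A μ) :=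
    ((Algebra.commute_algebraMap_left _ _).mul_left ((Commute.refl (u : A)).sub_right
      (Algebra.commute_algebraMap_right μ _)).units_inv_left).neg_left
  convert hcomm.isNilpotent_mul_left hu using 1
  rw [neg_mul, mul_sub, mul_assoc, Units.inv_mul, mul_one, mul_assoc, ← Algebra.commutes,
    ← mul_assoc, ← map_mul, inv_mul_cancel₀ hμ, map_one, one_mul]
  abel

end Unipotent

theorem Matrix.isNilpotent_of_isLowerTriangular_of_diag_eq_zero {n R : Type*} [Fintype n]
    [DecidableEq n] [LinearOrder n] [CommRing R] {M : Matrix n n R} (hM : M.IsLowerTriangular)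
    (hdiag : ∀ i, M i i = 0) : IsNilpotent M := by
  have hupper : Mᵀ.IsUpperTriangular := fun _ _ h => hM h
  have hchar : M.charpoly = X ^ Fintype.card n := by
    rw [← charpoly_transpose, charpoly_of_isUpperTriangular _ hupper]
    simp [hdiag]
  exact ⟨Fintype.card n, by simpa [hchar] using aeval_self_charpoly M⟩

theorem isNilpotent_jordanBlock_sub_algebraMap (l : ℕ) (lam : ℂ) :
    IsNilpotent (jordanBlock l lam - algebraMap ℂ _ lam) := by
  refine isNilpotent_of_isLowerTriangular_of_diag_eq_zero (fun i j hij => ?_) fun i => ?_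
  · have hij : (i : ℕ) < j := hij
    simp only [Matrix.sub_apply, jordanBlock, algebraMap_matrix_apply, Fin.ext_iff]
    rw [if_neg hij.ne, if_neg (by omega), if_neg hij.ne, sub_zero]
  · simp [jordanBlock, algebraMap_matrix_apply]

def Matrix.toContinuousLinearMapAlgEquiv (𝕜 n : Type*) [NontriviallyNormedField 𝕜]
    [CompleteSpace 𝕜] [Fintype n] [DecidableEq n] :
    Matrix n n 𝕜 ≃ₐ[𝕜] ((n → 𝕜) →L[𝕜] (n → 𝕜)) :=
  toLinAlgEquiv'.trans (Module.End.toContinuousLinearMap _)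

theorem Matrix.toContinuousLinearMapAlgEquiv_apply {𝕜 n : Type*} [NontriviallyNormedField 𝕜]
    [CompleteSpace 𝕜] [Fintype n] [DecidableEq n] (M : Matrix n n 𝕜) (v : n → 𝕜) :
    toContinuousLinearMapAlgEquiv 𝕜 n M v = M *ᵥ v :=
  rfl

section Cohomological

variable {𝕜 E S : Type*} [NontriviallyNormedField 𝕜] [NormedAddCommGroup E] [NormedSpace 𝕜 E]
  {M : E →L[𝕜] E} {T : S → S}

theorem eq_pow_apply_iterate {g : S → E} (hg : ∀ x, g x = M (g (T x))) (n : ℕ) (x : S) :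
    g x = (M ^ n) (g (T^[n] x)) := by
  induction n generalizing x with
  | zero => rfl
  | succ n ih => rw [ih x, hg, pow_succ, mul_apply_eq_comp, Function.iterate_succ_apply']

theorem eq_zero_of_forall_eq_apply_comp (hM : Tendsto (fun n => ‖M ^ n‖) atTop (𝓝 0))
    {d : S → E} (hd : ∀ x, d x = M (d (T x))) (hbdd : ∃ C, ∀ x, ‖d x‖ ≤ C) : d = 0 := by
  obtain ⟨C, hC⟩ := hbdd
  funext x
  have hle : ∀ n, ‖d x‖ ≤ ‖M ^ n‖ * C := fun n =>
    (eq_pow_apply_iterate hd n x).symm ▸ (M ^ n).le_opNorm_of_le (hC _)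
  have hlim : Tendsto (fun n => ‖M ^ n‖ * C) atTop (𝓝 0) := by simpa using hM.mul_const C
  exact norm_le_zero_iff.mp (ge_of_tendsto' hlim hle)

theorem exists_forall_eq_apply_comp_of_summable [CompleteSpace E]
    (hM : Summable fun n => ‖M ^ n‖) {h : S → E} (hh : ∃ C, ∀ x, ‖M (h (T x)) - h x‖ ≤ C) :
    ∃ g : S → E, (∀ x, g x = M (g (T x))) ∧ ∃ C, ∀ x, ‖g x - h x‖ ≤ C := by
  obtain ⟨C, hC⟩ := hh
  set e : S → E := fun x => M (h (T x)) - h x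
  set f : S → ℕ → E := fun x n => (M ^ n) (e (T^[n] x))
  have hf : ∀ x n, ‖f x n‖ ≤ ‖M ^ n‖ * C := fun x n => (M ^ n).le_opNorm_of_le (hC _)
  have hfs : ∀ x, Summable (f x) := fun x => (hM.mul_right C).of_norm_bounded (hf x)
  have hshift : ∀ x, ∑' n, f x n = e x + M (∑' n, f (T x) n) := by
    intro x
    rw [(hfs x).tsum_eq_zero_add, M.map_tsum (hfs (T x))]
    congr 1
    refine tsum_congr fun n => ?_
    simp only [f, pow_succ', mul_apply_eq_comp, Function.iterate_succ_apply]
  refine ⟨fun x => h x + ∑' n, f x n, fun x => ?_, ∑' n, ‖M ^ n‖ * C, fun x => ?_⟩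
  · simp only [hshift x, map_add, e]
    abel
  · rw [add_sub_cancel_left]
    exact tsum_of_norm_bounded (hM.mul_right C).hasSum (hf x)

theorem existsUnique_forall_eq_apply_comp_of_summable [CompleteSpace E]
    (hM : Summable fun n => ‖M ^ n‖) {h : S → E} (hh : ∃ C, ∀ x, ‖M (h (T x)) - h x‖ ≤ C) :
    ∃! g : S → E, (∀ x, g x = M (g (T x))) ∧ ∃ C, ∀ x, ‖g x - h x‖ ≤ C := by
  obtain ⟨g, hg, hgh⟩ := exists_forall_eq_apply_comp_of_summable hM hh
  refine ⟨g, ⟨hg, hgh⟩, fun g' ⟨hg', hg'h⟩ => ?_⟩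
  obtain ⟨C, hC⟩ := hgh
  obtain ⟨C', hC'⟩ := hg'h
  have hdiff : (fun x => g' x - g x) = 0 := by
    refine eq_zero_of_forall_eq_apply_comp hM.tendsto_atTop_zero (T := T)
      (fun x => by rw [map_sub, ← hg, ← hg']) ⟨C' + C, fun x => ?_⟩
    calc ‖g' x - g x‖ = ‖(g' x - h x) - (g x - h x)‖ := by rw [sub_sub_sub_cancel_right]
      _ ≤ C' + C := (norm_sub_le _ _).trans (add_le_add (hC' x) (hC x))
  funext x
  exact sub_eq_zero.mp (congrFun hdiff x)

theorem existsUnique_forall_comp_eq_apply_of_summable_inv [CompleteSpace E]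
    {L : (E →L[𝕜] E)ˣ} (hL : Summable fun n => ‖(↑L⁻¹ : E →L[𝕜] E) ^ n‖) (R : S → S)
    {h : S → E} (hh : ∃ C, ∀ x, ‖h (R x) - (L : E →L[𝕜] E) (h x)‖ ≤ C) :
    ∃! g : S → E, (∀ x, g (R x) = (L : E →L[𝕜] E) (g x)) ∧ ∃ C, ∀ x, ‖g x - h x‖ ≤ C := by
  have hinv : ∀ v w : E, w = (L : E →L[𝕜] E) v ↔ v = (↑L⁻¹ : E →L[𝕜] E) w := by
    intro v w
    constructor <;> rintro rfl <;> simp [← mul_apply_eq_comp]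
  obtain ⟨C, hC⟩ := hh
  refine (existsUnique_congr fun g => and_congr_left' (forall_congr' fun x => hinv _ _)).mpr
    (existsUnique_forall_eq_apply_comp_of_summable hL ⟨‖(↑L⁻¹ : E →L[𝕜] E)‖ * C, fun x => ?_⟩)
  rw [(hinv (h x) _).mp rfl, ← map_sub]
  exact (↑L⁻¹ : E →L[𝕜] E).le_opNorm_of_le (hC x)

theorem existsUnique_forall_comp_eq_apply_of_summable [CompleteSpace E]
    {L : (E →L[𝕜] E)ˣ} (hL : Summable fun n => ‖(L : E →L[𝕜] E) ^ n‖) (R : S ≃ S)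
    {h : S → E} (hh : ∃ C, ∀ x, ‖h (R x) - (L : E →L[𝕜] E) (h x)‖ ≤ C) :
    ∃! g : S → E, (∀ x, g (R x) = (L : E →L[𝕜] E) (g x)) ∧ ∃ C, ∀ x, ‖g x - h x‖ ≤ C := by
  obtain ⟨C, hC⟩ := hh
  refine (existsUnique_congr fun g => and_congr_left' ?_).mpr
    (existsUnique_forall_eq_apply_comp_of_summable hL (T := R.symm) ⟨C, fun y => ?_⟩)
  · refine Iff.trans ?_ R.forall_congr_right
    simp only [R.symm_apply_apply, eq_comm]
  · simpa [norm_sub_rev] using hC (R.symm y)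

end Cohomological

/-- Axiomatic canonical heights for Jordan blocks: existence and uniqueness. -/
theorem canonical_height_exists_unique (l : ℕ) (lam : ℂ)
    (h0 : ‖lam‖ ≠ 0) (h1 : ‖lam‖ ≠ 1)
    {S : Type*} (R : S → S) (hR : Function.Bijective R)
    (h : S → Fin (l + 1) → ℂ)
    (hbdd : ∃ C : ℝ, ∀ x : S, ‖h (R x) - ((jordanBlock l lam)⁻¹).mulVec (h x)‖ ≤ C) :
    ∃! hhat : S → Fin (l + 1) → ℂ,
      (∀ x : S, hhat (R x) = ((jordanBlock l lam)⁻¹).mulVec (hhat x)) ∧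
      (∃ C : ℝ, ∀ x : S, ‖hhat x - h x‖ ≤ C) := by
  set ψ := toContinuousLinearMapAlgEquiv ℂ (Fin (l + 1))
  have hsum : ∀ (a : Matrix (Fin (l + 1)) (Fin (l + 1)) ℂ) (μ : ℂ), ‖μ‖ < 1 →
      IsNilpotent (a - algebraMap ℂ _ μ) → Summable fun n => ‖ψ a ^ n‖ := fun a μ hμ ha =>
    summable_norm_pow_of_isNilpotent_sub_algebraMap hμ (by simpa using ha.map ψ)
  have hlam : lam ≠ 0 := norm_ne_zero_iff.mp h0
  have hN := isNilpotent_jordanBlock_sub_algebraMap l lam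
  obtain ⟨U, hU⟩ := isUnit_of_isNilpotent_sub_algebraMap hlam hN
  set L := Units.map ψ.toMonoidHom U⁻¹
  have hL : ∀ v, (L : _ →L[ℂ] _) v = (jordanBlock l lam)⁻¹ *ᵥ v := fun v => by
    simp only [L, Units.coe_map, coe_units_inv, hU]
    exact toContinuousLinearMapAlgEquiv_apply _ v
  simp only [← hL] at hbdd ⊢
  rcases h1.lt_or_gt with hlt | hgt
  · refine existsUnique_forall_comp_eq_apply_of_summable_inv ?_ R hbdd
    simpa [L, hU] using hsum _ lam hlt hN
  · refine existsUnique_forall_comp_eq_apply_of_summable ?_ (Equiv.ofBijective R hR) hbdd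
    have := hsum _ lam⁻¹ (by rwa [norm_inv, inv_lt_one₀ (norm_pos_iff.mpr hlam)])
      (U.isNilpotent_inv_sub_algebraMap hlam (hU ▸ hN))
    simpa [L] using this
end

section
/- Let λ ∈ ℂ with 0 < |λ| < 1, let S be a set with a bijection R : S → S, and let Λ be the (l+1)×(l+1) Jordan block of eigenvalue λ. If g : S → ℂ^{l+1} is a bounded function satisfying g ∘ R = Λ^{−1} g, then g is identically zero. -/
theorem eq_zero_of_eq_smul_comp_of_norm_lt_one {𝕜 E S : Type*} [NormedField 𝕜]
    [NormedAddCommGroup E] [NormedSpace 𝕜 E] {c : 𝕜} (hc : ‖c‖ < 1) {R : S → S}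
    {φ : S → E} (hφ : ∀ x, φ x = c • φ (R x)) {C : ℝ} (hC : ∀ x, ‖φ x‖ ≤ C) (x : S) :
    φ x = 0 := by
  have hpow : ∀ n : ℕ, ∀ y, ‖φ y‖ ≤ ‖c‖ ^ n * C := by
    intro n
    induction n with
    | zero => simpa using hC
    | succ n ih =>
      intro y
      calc ‖φ y‖ = ‖c‖ * ‖φ (R y)‖ := by rw [hφ y, norm_smul]
        _ ≤ ‖c‖ * (‖c‖ ^ n * C) := by gcongr; exact ih _
        _ = ‖c‖ ^ (n + 1) * C := by ring
  have hlim : Filter.Tendsto (fun n : ℕ => ‖c‖ ^ n * C) Filter.atTop (nhds 0) := by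
    simpa using (tendsto_pow_atTop_nhds_zero_of_lt_one (norm_nonneg c) hc).mul_const C
  exact norm_le_zero_iff.mp (ge_of_tendsto' hlim fun n => hpow n x)

theorem jordanBlock_isLowerTriangular (l : ℕ) (lam : ℂ) :
    (jordanBlock l lam).IsLowerTriangular := fun i j (hij : i < j) => by
  simp only [jordanBlock]
  rw [if_neg (by omega), if_neg (by omega)]

theorem jordanBlock_det (l : ℕ) (lam : ℂ) : (jordanBlock l lam).det = lam ^ (l + 1) := by
  simp [Matrix.det_of_isLowerTriangular _ (jordanBlock_isLowerTriangular l lam), jordanBlock]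

theorem jordanBlock_mulVec_apply_of_forall_lt {l : ℕ} (lam : ℂ) {v : Fin (l + 1) → ℂ}
    {i : Fin (l + 1)} (hv : ∀ j < i, v j = 0) : (jordanBlock l lam).mulVec v i = lam * v i := by
  rw [Matrix.mulVec, dotProduct, Finset.sum_eq_single i]
  · simp [jordanBlock]
  · intro j _ hji
    by_cases hsub : (i : ℕ) = j + 1
    · rw [hv j (Fin.lt_def.mpr (by omega)), mul_zero]
    · simp [jordanBlock, hsub, Fin.val_ne_of_ne hji.symm]
  · simp

theorem bounded_solution_eq_zero_general (l : ℕ) (lam : ℂ)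
    (h0 : 0 < ‖lam‖) (h1 : ‖lam‖ < 1)
    {S : Type*} (R : S → S)
    (g : S → Fin (l + 1) → ℂ)
    (hbdd : ∃ C : ℝ, ∀ x : S, ‖g x‖ ≤ C)
    (hfe : ∀ x : S, g (R x) = ((jordanBlock l lam)⁻¹).mulVec (g x)) :
    ∀ x : S, g x = 0 := by
  obtain ⟨C, hC⟩ := hbdd
  have hdet : IsUnit (jordanBlock l lam).det := by
    rw [jordanBlock_det]
    exact (pow_ne_zero _ (norm_pos_iff.mp h0)).isUnit
  have hg : ∀ x, g x = (jordanBlock l lam).mulVec (g (R x)) := fun x => by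
    rw [hfe, Matrix.mulVec_mulVec, Matrix.mul_nonsing_inv _ hdet, Matrix.one_mulVec]
  have hcoord : ∀ i x, g x i = 0 := by
    intro i
    induction i using WellFoundedLT.induction with
    | _ i ih =>
      refine eq_zero_of_eq_smul_comp_of_norm_lt_one h1 (R := R) (φ := fun x => g x i)
        (fun x => ?_) (fun x => (norm_le_pi_norm (g x) i).trans (hC x))
      rw [hg x, jordanBlock_mulVec_apply_of_forall_lt lam fun j hj => ih j hj (R x), smul_eq_mul]
  exact fun x => funext fun i => hcoord i x

/-- Uniqueness part of the canonical height construction: a bounded solution of the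
functional equation is identically zero. -/
theorem bounded_solution_eq_zero (l : ℕ) (lam : ℂ)
    (h0 : 0 < ‖lam‖) (h1 : ‖lam‖ < 1)
    {S : Type*} (R : S → S) (hR : Function.Bijective R)
    (g : S → Fin (l + 1) → ℂ)
    (hbdd : ∃ C : ℝ, ∀ x : S, ‖g x‖ ≤ C)
    (hfe : ∀ x : S, g (R x) = ((jordanBlock l lam)⁻¹).mulVec (g x)) :
    ∀ x : S, g x = 0 :=
  bounded_solution_eq_zero_general l lam h0 h1 R g hbdd hfe
end
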